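/- arXiv:1509.03585 — 6 statements merged into one kernel-verified Lean document; each statement's English description precedes it below -/
import Mathlib

section
/- Let A be a nonzero n×n matrix with nonnegative entries, N = ‖A‖_∞ its maximum row sum, Ã = A/N, and α ∈ (0,1). Then every entry of the vector v^(k)_α = Σ_{ℓ=0}^{k} (-1)^ℓ α^ℓ Ã^ℓ e lies in the interval [0,1], for all k ≥ 0. -/
open Matrix

private lemma aux_partial_sum (n : ℕ) (At : Matrix (Fin n) (Fin n) ℝ)
    (h0 : ∀ i j, 0 ≤ At i j) (hrow : ∀ i, ∑ j, At i j ≤ 1)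
    (α : ℝ) (hα : 0 < α) (hα1 : α < 1) :
    ∀ k i, 0 ≤ (∑ L ∈ Finset.range (k + 1),
        ((-1 : ℝ) ^ L * α ^ L) • ((At ^ L) *ᵥ (fun _ => (1 : ℝ)))) i ∧
      (∑ L ∈ Finset.range (k + 1),
        ((-1 : ℝ) ^ L * α ^ L) • ((At ^ L) *ᵥ (fun _ => (1 : ℝ)))) i ≤ 1 := by
  set f : ℕ → Fin n → ℝ :=
    fun L => ((-1 : ℝ) ^ L * α ^ L) • ((At ^ L) *ᵥ (fun _ => (1 : ℝ))) with hf
  have hf0 : ∀ i, f 0 i = 1 := by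
    intro i
    simp [hf, Matrix.one_mulVec]
  have hkey : ∀ w : Fin n → ℝ, (∀ j, 0 ≤ w j ∧ w j ≤ 1) →
      ∀ i, 0 ≤ (At *ᵥ w) i ∧ (At *ᵥ w) i ≤ 1 := by
    intro w hw i
    have heval : (At *ᵥ w) i = ∑ j, At i j * w j := rfl
    constructor
    · rw [heval]
      apply Finset.sum_nonneg
      intro j _
      exact mul_nonneg (h0 i j) (hw j).1
    · calc (At *ᵥ w) i = ∑ j, At i j * w j := heval
        _ ≤ ∑ j, At i j * 1 := by
            apply Finset.sum_le_sum
            intro j _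
            exact mul_le_mul_of_nonneg_left (hw j).2 (h0 i j)
        _ = ∑ j, At i j := by simp
        _ ≤ 1 := hrow i
  have hrec : ∀ k i, (∑ L ∈ Finset.range (k + 1 + 1), f L) i =
      1 - α * (At *ᵥ (∑ L ∈ Finset.range (k + 1), f L)) i := by
    intro k i
    have hsucc : ∀ L, f (L + 1) = (-α) • (At *ᵥ f L) := by
      intro L
      simp only [hf, pow_succ']
      rw [← Matrix.mulVec_mulVec, Matrix.mulVec_smul, smul_smul]
      congr 1
      ring
    rw [Finset.sum_range_succ']
    have : (∑ L ∈ Finset.range (k + 1), f (L + 1)) =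
        (-α) • (At *ᵥ (∑ L ∈ Finset.range (k + 1), f L)) := by
      simp only [hsucc]
      rw [← Finset.smul_sum]
      congr 1
      rw [← Matrix.mulVecLin_apply, map_sum]
      simp [Matrix.mulVecLin_apply]
    rw [this]
    simp only [Pi.add_apply, Pi.smul_apply, hf0, smul_eq_mul]
    ring
  intro k
  induction k with
  | zero =>
      intro i
      simp only [zero_add, Finset.sum_range_one]
      rw [hf0 i]
      norm_num
  | succ m ih =>
      intro i
      rw [hrec m i]
      have h1 := hkey _ ih i
      have hα' := hα.le
      constructor
      · nlinarith [h1.1, h1.2]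
      · nlinarith [h1.1, h1.2]

/-- every entry of the partial alternating sum
v^(k) = Σ_{L=0}^{k} (-1)^L α^L Ã^L e lies in [0,1], where Ã = A/N and
N is the maximum row sum of the nonzero nonnegative matrix A. -/
theorem counting_partial_sums_in_unit_interval (n : ℕ) [NeZero n]
    (A : Matrix (Fin n) (Fin n) ℝ) (hA : A ≠ 0) (hpos : ∀ i j, 0 ≤ A i j)
    (α : ℝ) (hα : 0 < α) (hα1 : α < 1) (k : ℕ) :
    let N : ℝ := Finset.univ.sup' Finset.univ_nonempty (fun i => ∑ j, |A i j|)
    let At : Matrix (Fin n) (Fin n) ℝ := N⁻¹ • A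
    let v : Fin n → ℝ :=
      ∑ L ∈ Finset.range (k + 1), ((-1 : ℝ) ^ L * α ^ L) • ((At ^ L) *ᵥ (fun _ => (1 : ℝ)))
    ∀ i, 0 ≤ v i ∧ v i ≤ 1 := by
  intro N At v
  -- A has a positive entry
  obtain ⟨i0, j0, hij⟩ : ∃ i j, A i j ≠ 0 := by
    by_contra h
    push_neg at h
    exact hA (by ext i j; simp [h i j])
  have hij' : 0 < A i0 j0 := lt_of_le_of_ne (hpos i0 j0) (Ne.symm hij)
  have hN : 0 < N := by
    have h1 : ∑ j, |A i0 j| ≤ N :=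
      Finset.le_sup' (fun i => ∑ j, |A i j|) (Finset.mem_univ i0)
    have h2 : 0 < ∑ j, |A i0 j| := by
      apply Finset.sum_pos'
      · intro j _; exact abs_nonneg _
      · exact ⟨j0, Finset.mem_univ j0, by rwa [abs_of_pos hij']⟩
    linarith
  have h0 : ∀ i j, 0 ≤ At i j := by
    intro i j
    exact mul_nonneg (inv_nonneg.mpr hN.le) (hpos i j)
  have hrow : ∀ i, ∑ j, At i j ≤ 1 := by
    intro i
    have h1 : ∑ j, |A i j| ≤ N :=
      Finset.le_sup' (fun i => ∑ j, |A i j|) (Finset.mem_univ i)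
    have h2 : ∑ j, At i j = N⁻¹ * ∑ j, A i j := by
      rw [Finset.mul_sum]; rfl
    rw [h2]
    have h3 : ∑ j, A i j = ∑ j, |A i j| := by
      apply Finset.sum_congr rfl
      intro j _
      exact (abs_of_nonneg (hpos i j)).symm
    rw [h3, inv_mul_le_iff₀ hN]
    nlinarith
  exact aux_partial_sum n At h0 hrow α hα hα1 k
end

section
/- The counting semantics satisfies Void Precedence: for any argumentation framework with arguments x and y, if x has no attackers and y has at least one attacker, then v_α(x) > v_α(y), where v_α is the unique solution of v = e − αÃv with α ∈ (0,1). -/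
/-- Void Precedence for the counting semantics: if x has no
attackers and y has at least one attacker, then v_α(x) > v_α(y), where v_α is
the unique solution of v = e − αÃv, Ã = A/N, N the maximal row sum of A. -/
theorem counting_void_precedence (n : ℕ) [NeZero n]
    (R : Fin n → Fin n → Prop) [DecidableRel R]
    (α : ℝ) (hα : 0 < α) (hα1 : α < 1)
    (N : ℝ)
    (hN : N = Finset.univ.sup' Finset.univ_nonempty
        (fun i => ((Finset.univ.filter (fun j => R j i)).card : ℝ)))
    (v : Fin n → ℝ)
    (hv : ∀ i, v i = 1 - (α / N) * ∑ j ∈ Finset.univ.filter (fun j => R j i), v j)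
    (x y : Fin n) (hx : ∀ z, ¬ R z x) (hy : ∃ z, R z y) :
    v y < v x := by
  set T : Fin n → Finset (Fin n) := fun i => Finset.univ.filter (fun j => R j i) with hT
  have hcardN : ∀ i, ((T i).card : ℝ) ≤ N := by
    intro i
    rw [hN]
    exact Finset.le_sup' (fun i => ((Finset.univ.filter (fun j => R j i)).card : ℝ))
      (Finset.mem_univ i)
  have hTy : (T y).Nonempty := by
    obtain ⟨z, hz⟩ := hy
    exact ⟨z, by simp [hT, hz]⟩
  have hNpos : 0 < N := by
    have h1 : (1 : ℝ) ≤ ((T y).card : ℝ) := by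
      exact_mod_cast Finset.card_pos.mpr hTy
    linarith [hcardN y]
  have hv' : ∀ i, v i = 1 - (α / N) * ∑ j ∈ T i, v j := hv
  have hvx : v x = 1 := by
    have hTx : T x = ∅ := by
      ext z; simp [hT, hx z]
    rw [hv' x, hTx]
    simp
  -- max and min of v
  obtain ⟨i0, -, hM⟩ := Finset.exists_max_image Finset.univ v Finset.univ_nonempty
  obtain ⟨i1, -, hm⟩ := Finset.exists_min_image Finset.univ v Finset.univ_nonempty
  set M := v i0 with hMdef
  set m := v i1 with hmdef
  have hM' : ∀ i, v i ≤ M := fun i => hM i (Finset.mem_univ i)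
  have hm' : ∀ i, m ≤ v i := fun i => hm i (Finset.mem_univ i)
  have hM1 : 1 ≤ M := hvx ▸ hM' x
  -- m ≥ 1 - α M
  have hsum_le : ∀ i, ∑ j ∈ T i, v j ≤ N * M := by
    intro i
    calc ∑ j ∈ T i, v j ≤ ∑ _j ∈ T i, M := Finset.sum_le_sum (fun j _ => hM' j)
      _ = ((T i).card : ℝ) * M := by rw [Finset.sum_const, nsmul_eq_mul]
      _ ≤ N * M := by
          apply mul_le_mul_of_nonneg_right (hcardN i) (by linarith)
  have hmlb : 1 - α * M ≤ m := by
    have := hv' i1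
    have h1 : (α / N) * ∑ j ∈ T i1, v j ≤ (α / N) * (N * M) :=
      mul_le_mul_of_nonneg_left (hsum_le i1) (by positivity)
    have h2 : (α / N) * (N * M) = α * M := by field_simp
    rw [hmdef, this]; linarith
  -- m > 0
  have hmpos : 0 < m := by
    by_contra hneg
    push_neg at hneg
    have hsum_ge : N * m ≤ ∑ j ∈ T i0, v j := by
      calc N * m ≤ ((T i0).card : ℝ) * m := by
            exact mul_le_mul_of_nonpos_right (hcardN i0) hneg
        _ = ∑ _j ∈ T i0, m := by rw [Finset.sum_const, nsmul_eq_mul]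
        _ ≤ ∑ j ∈ T i0, v j := Finset.sum_le_sum (fun j _ => hm' j)
    have hMub : M ≤ 1 - α * m := by
      have := hv' i0
      have h1 : (α / N) * (N * m) ≤ (α / N) * ∑ j ∈ T i0, v j :=
        mul_le_mul_of_nonneg_left hsum_ge (by positivity)
      have h2 : (α / N) * (N * m) = α * m := by field_simp
      rw [hMdef, this]; linarith
    nlinarith
  -- conclude
  have hsumpos : 0 < ∑ j ∈ T y, v j :=
    Finset.sum_pos (fun j _ => lt_of_lt_of_le hmpos (hm' j)) hTy
  have := hv' y
  have : v y < 1 := by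
    rw [this]
    have : 0 < (α / N) * ∑ j ∈ T y, v j := by positivity
    linarith
  linarith [hvx ▸ this]
end

section
/- The counting semantics satisfies Counter-Transitivity: if there is an injection δ from R^−(x) into R^−(y) such that v_α(δ(z)) ≥ v_α(z) for every z ∈ R^−(x), then v_α(x) ≥ v_α(y). -/
/-!
Every solution of `v i = 1 - c * ∑_{j ∈ S i} v j` with `c * #(S i) ≤ a < 1` is nonnegative:
with `μ = min (min v) 0`, one application of the equation gives `v ≤ 1 - a μ`, a second one gives
`v ≥ 1 - a + a² μ`, and for `μ = min v < 0` this forces `μ (1 - a²) ≥ 1 - a > 0`.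
Nonnegativity lets the injection δ compare the attacker sums, `∑_{R⁻(x)} v ≤ ∑_{R⁻(y)} v`,
and the map `s ↦ 1 - (α / N) s` is antitone.
-/

open Finset

lemma mul_sum_le_mul_of_forall_le {ι : Type*} {s : Finset ι} {v : ι → ℝ} {c a h : ℝ}
    (hc : 0 ≤ c) (hs : c * #s ≤ a) (hh : 0 ≤ h) (hv : ∀ j ∈ s, v j ≤ h) :
    c * ∑ j ∈ s, v j ≤ a * h :=
  calc c * ∑ j ∈ s, v j ≤ c * (#s * h) := by
        gcongr
        simpa only [nsmul_eq_mul] using sum_le_card_nsmul s v h hv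
    _ = (c * #s) * h := by ring
    _ ≤ a * h := by gcongr

lemma mul_mul_le_mul_sum_of_forall_ge {ι : Type*} {s : Finset ι} {v : ι → ℝ} {c a μ : ℝ}
    (hc : 0 ≤ c) (hs : c * #s ≤ a) (hμ : μ ≤ 0) (hv : ∀ j ∈ s, μ ≤ v j) :
    a * μ ≤ c * ∑ j ∈ s, v j := by
  have := mul_sum_le_mul_of_forall_le hc hs (neg_nonneg.mpr hμ)
    (v := fun j => -v j) fun j hj => neg_le_neg (hv j hj)
  simp only [sum_neg_distrib] at this
  linarith

theorem nonneg_of_eq_one_sub_mul_sum {ι : Type*} [Finite ι] {S : ι → Finset ι} {v : ι → ℝ}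
    {c a : ℝ} (hc : 0 ≤ c) (ha : a < 1) (hS : ∀ i, c * #(S i) ≤ a)
    (hv : ∀ i, v i = 1 - c * ∑ j ∈ S i, v j) (i : ι) :
    0 ≤ v i := by
  have : Nonempty ι := ⟨i⟩
  obtain ⟨i₀, hi₀⟩ := Finite.exists_min v
  have ha0 : 0 ≤ a := (mul_nonneg hc (Nat.cast_nonneg _)).trans (hS i)
  set μ := min (v i₀) 0
  have hμ : μ ≤ 0 := min_le_right _ _
  have hμv : ∀ j, μ ≤ v j := fun j => (min_le_left _ _).trans (hi₀ j)
  have upper : ∀ j, v j ≤ 1 - a * μ := fun j => by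
    rw [hv j]
    linarith [mul_mul_le_mul_sum_of_forall_ge hc (hS j) hμ fun k _ => hμv k]
  have lower : 1 - a * (1 - a * μ) ≤ v i₀ := by
    rw [hv i₀]
    linarith [mul_sum_le_mul_of_forall_le hc (hS i₀)
      (by linarith [mul_nonpos_of_nonneg_of_nonpos ha0 hμ]) fun k _ => upper k]
  refine le_trans ?_ (hi₀ i)
  by_contra! hneg
  rw [show μ = v i₀ from min_eq_left hneg.le] at lower
  have hprod : v i₀ * (1 + a) < 0 := mul_neg_of_neg_of_pos hneg (by linarith)
  nlinarith [mul_pos (sub_pos.2 ha) (show 0 < 1 - v i₀ * (1 + a) by linarith)]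

lemma sum_le_sum_of_injOn {κ ι M : Type*} [AddCommMonoid M] [PartialOrder M]
    [IsOrderedAddMonoid M] {s : Finset κ} {t : Finset ι} {δ : κ → ι} {f : κ → M} {g : ι → M}
    (hinj : Set.InjOn δ s) (hmap : ∀ z ∈ s, δ z ∈ t) (hle : ∀ z ∈ s, f z ≤ g (δ z))
    (hg : ∀ w ∈ t, 0 ≤ g w) :
    ∑ z ∈ s, f z ≤ ∑ w ∈ t, g w := by
  classical
  calc ∑ z ∈ s, f z ≤ ∑ z ∈ s, g (δ z) := sum_le_sum hle
    _ = ∑ w ∈ s.image δ, g w := (sum_image hinj).symm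
    _ ≤ ∑ w ∈ t, g w :=
      sum_le_sum_of_subset_of_nonneg (image_subset_iff.mpr hmap) fun w hw _ => hg w hw

/-- Counter-Transitivity for the counting semantics: if there is
an injection δ from the attackers of x into the attackers of y such that
v_α(δ(z)) ≥ v_α(z) for every attacker z of x, then v_α(x) ≥ v_α(y). -/
theorem counting_counter_transitivity (n : ℕ) [NeZero n]
    (R : Fin n → Fin n → Prop) [DecidableRel R]
    (α : ℝ) (hα : 0 < α) (hα1 : α < 1)
    (N : ℝ)
    (hN : N = Finset.univ.sup' Finset.univ_nonempty
        (fun i => ((Finset.univ.filter (fun j => R j i)).card : ℝ)))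
    (v : Fin n → ℝ)
    (hv : ∀ i, v i = 1 - (α / N) * ∑ j ∈ Finset.univ.filter (fun j => R j i), v j)
    (x y : Fin n) (δ : Fin n → Fin n)
    (hinj : Set.InjOn δ {z | R z x})
    (hmap : ∀ z, R z x → R (δ z) y)
    (hge : ∀ z, R z x → v z ≤ v (δ z)) :
    v y ≤ v x := by
  set attackers := fun i => univ.filter (fun j => R j i)
  have hcard_le : ∀ i, (#(attackers i) : ℝ) ≤ N := fun i =>
    hN ▸ le_sup' (fun i => (#(attackers i) : ℝ)) (mem_univ i)
  have hN0 : 0 ≤ N := (Nat.cast_nonneg _).trans (hcard_le x)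
  have hcoef : 0 ≤ α / N := div_nonneg hα.le hN0
  have hS : ∀ i, α / N * #(attackers i) ≤ α := fun i => by
    rw [div_mul_eq_mul_div, mul_div_assoc]
    exact mul_le_of_le_one_right hα.le (div_le_one_of_le₀ (hcard_le i) hN0)
  have mem_attackers : ∀ z i, z ∈ attackers i ↔ R z i := by simp [attackers]
  have hsum : ∑ z ∈ attackers x, v z ≤ ∑ w ∈ attackers y, v w :=
    sum_le_sum_of_injOn
      (fun a ha b hb => hinj ((mem_attackers a x).mp ha) ((mem_attackers b x).mp hb))
      (fun z hz => (mem_attackers _ y).mpr (hmap z ((mem_attackers z x).mp hz)))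
      (fun z hz => hge z ((mem_attackers z x).mp hz))
      (fun w _ => nonneg_of_eq_one_sub_mul_sum hcoef hα1 hS hv w)
  rw [hv x, hv y]
  linarith [mul_le_mul_of_nonneg_left hsum hcoef]
end

section
/- The counting semantics satisfies Strict Counter-Transitivity: if there is an injection δ from R^−(x) into R^−(y) with v_α(δ(z)) ≥ v_α(z) for all z ∈ R^−(x), and moreover either |R^−(y)| > |R^−(x)| (with every extra attacker having strictly positive value) or v_α(δ(z)) > v_α(z) for some z, then v_α(x) > v_α(y). -/
/-- All values of the counting semantics are strictly positive. -/
theorem counting_v_pos (n : ℕ) [NeZero n] (R : Fin n → Fin n → Prop) [DecidableRel R]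
    (α N : ℝ) (hα : 0 < α) (hα1 : α < 1) (hN1 : 1 ≤ N)
    (hcard : ∀ i : Fin n, ((Finset.univ.filter (fun j => R j i)).card : ℝ) ≤ N)
    (v : Fin n → ℝ)
    (hv : ∀ i, v i = 1 - (α / N) * ∑ j ∈ Finset.univ.filter (fun j => R j i), v j) :
    ∀ i, 0 < v i := by
  have hNpos : (0:ℝ) < N := lt_of_lt_of_le one_pos hN1
  have hβ : 0 < α / N := div_pos hα hNpos
  have hβN : (α / N) * N = α := div_mul_cancel₀ α (ne_of_gt hNpos)
  obtain ⟨iM, _, hiM⟩ := Finset.exists_mem_eq_sup' (Finset.univ_nonempty (α := Fin n)) v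
  obtain ⟨im, _, him⟩ := Finset.exists_mem_eq_inf' (Finset.univ_nonempty (α := Fin n)) v
  set M := Finset.univ.sup' Finset.univ_nonempty v with hMdef
  set m := Finset.univ.inf' Finset.univ_nonempty v with hmdef
  have hle : ∀ i, v i ≤ M := fun i => Finset.le_sup' v (Finset.mem_univ i)
  have hgem : ∀ i, m ≤ v i := fun i => Finset.inf'_le v (Finset.mem_univ i)
  -- M ≥ 0
  have hM0 : 0 ≤ M := by
    by_contra h
    push_neg at h
    have hS : ∑ j ∈ Finset.univ.filter (fun j => R j iM), v j ≤ 0 :=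
      Finset.sum_nonpos fun j _ => le_of_lt (lt_of_le_of_lt (hle j) h)
    have h1 : (1:ℝ) ≤ v iM := by
      rw [hv iM]
      nlinarith [mul_nonpos_of_nonneg_of_nonpos hβ.le hS]
    rw [← hiM] at h1
    linarith
  -- lower bound: v i ≥ 1 - α * M for all i
  have hlower : ∀ i, 1 - α * M ≤ v i := by
    intro i
    have h1 : ∑ j ∈ Finset.univ.filter (fun j => R j i), v j ≤
        ((Finset.univ.filter (fun j => R j i)).card : ℝ) * M := by
      have := Finset.sum_le_card_nsmul (Finset.univ.filter (fun j => R j i)) v M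
        (fun j _ => hle j)
      rwa [nsmul_eq_mul] at this
    have h2 : ((Finset.univ.filter (fun j => R j i)).card : ℝ) * M ≤ N * M :=
      mul_le_mul_of_nonneg_right (hcard i) hM0
    have h3 := mul_le_mul_of_nonneg_left (h1.trans h2) hβ.le
    rw [hv i]
    nlinarith
  have hmlower : 1 - α * M ≤ m := by rw [him]; exact hlower im
  -- m > 0
  have hmpos : 0 < m := by
    by_cases hm0 : 0 ≤ m
    · -- then M ≤ 1, so m ≥ 1 - α > 0
      have hS : 0 ≤ ∑ j ∈ Finset.univ.filter (fun j => R j iM), v j :=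
        Finset.sum_nonneg fun j _ => le_trans hm0 (hgem j)
      have hM1 : M ≤ 1 := by
        rw [hiM, hv iM]
        nlinarith [mul_nonneg hβ.le hS]
      nlinarith
    · push_neg at hm0
      -- S_{iM} ≥ N * m, hence M ≤ 1 - α * m
      have h1 : ((Finset.univ.filter (fun j => R j iM)).card : ℝ) * m ≤
          ∑ j ∈ Finset.univ.filter (fun j => R j iM), v j := by
        have := Finset.card_nsmul_le_sum (Finset.univ.filter (fun j => R j iM)) v m
          (fun j _ => hgem j)
        rwa [nsmul_eq_mul] at this
      have h2 : N * m ≤ ((Finset.univ.filter (fun j => R j iM)).card : ℝ) * m := by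
        apply mul_le_mul_of_nonpos_right (hcard iM) hm0.le
      have h3 := mul_le_mul_of_nonneg_left (h2.trans h1) hβ.le
      have hMle : M ≤ 1 - α * m := by
        rw [hiM, hv iM]
        nlinarith
      nlinarith
  exact fun i => lt_of_lt_of_le hmpos (hgem i)

/-- Strict Counter-Transitivity for the counting semantics: if
there is an injection δ from the attackers of x into the attackers of y with
v_α(δ(z)) ≥ v_α(z) for all attackers z of x, and moreover y has strictly more
attackers than x or v_α(δ(z)) > v_α(z) for some attacker z of x, then
v_α(x) > v_α(y). -/
theorem counting_strict_counter_transitivity (n : ℕ) [NeZero n]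
    (R : Fin n → Fin n → Prop) [DecidableRel R]
    (α : ℝ) (hα : 0 < α) (hα1 : α < 1)
    (N : ℝ)
    (hN : N = Finset.univ.sup' Finset.univ_nonempty
        (fun i => ((Finset.univ.filter (fun j => R j i)).card : ℝ)))
    (v : Fin n → ℝ)
    (hv : ∀ i, v i = 1 - (α / N) * ∑ j ∈ Finset.univ.filter (fun j => R j i), v j)
    (x y : Fin n) (δ : Fin n → Fin n)
    (hinj : Set.InjOn δ {z | R z x})
    (hmap : ∀ z, R z x → R (δ z) y)
    (hge : ∀ z, R z x → v z ≤ v (δ z))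
    (hstrict :
      (Finset.univ.filter (fun j => R j x)).card <
          (Finset.univ.filter (fun j => R j y)).card ∨
        ∃ z, R z x ∧ v z < v (δ z)) :
    v y < v x := by
  classical
  set Sx := Finset.univ.filter (fun j => R j x) with hSx
  set Sy := Finset.univ.filter (fun j => R j y) with hSy
  have hmemSx : ∀ z, z ∈ Sx ↔ R z x := by
    intro z; simp [hSx]
  have hmemSy : ∀ z, z ∈ Sy ↔ R z y := by
    intro z; simp [hSy]
  have hcard : ∀ i : Fin n, ((Finset.univ.filter (fun j => R j i)).card : ℝ) ≤ N := by
    intro i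
    rw [hN]
    exact Finset.le_sup' (fun i => ((Finset.univ.filter (fun j => R j i)).card : ℝ))
      (Finset.mem_univ i)
  -- Sy is nonempty in both cases
  have hSyne : Sy.Nonempty := by
    rcases hstrict with h | ⟨z, hz, _⟩
    · exact Finset.card_pos.mp (by omega)
    · exact ⟨δ z, (hmemSy _).mpr (hmap z hz)⟩
  have hN1 : 1 ≤ N := by
    have h1 : (1:ℝ) ≤ (Sy.card : ℝ) := by
      exact_mod_cast Finset.card_pos.mpr hSyne
    exact h1.trans (hcard y)
  have hNpos : (0:ℝ) < N := lt_of_lt_of_le one_pos hN1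
  have hβ : 0 < α / N := div_pos hα hNpos
  have hpos : ∀ i, 0 < v i := counting_v_pos n R α N hα hα1 hN1 hcard v hv
  -- injectivity on Sx
  have hinj' : ∀ z₁ ∈ Sx, ∀ z₂ ∈ Sx, δ z₁ = δ z₂ → z₁ = z₂ := by
    intro z₁ h₁ z₂ h₂ h
    exact hinj ((hmemSx z₁).mp h₁) ((hmemSx z₂).mp h₂) h
  have hsub : Sx.image δ ⊆ Sy := by
    intro w hw
    obtain ⟨z, hz, rfl⟩ := Finset.mem_image.mp hw
    exact (hmemSy _).mpr (hmap z ((hmemSx z).mp hz))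
  have himg : ∑ z ∈ Sx, v (δ z) = ∑ w ∈ Sx.image δ, v w :=
    (Finset.sum_image hinj').symm
  -- key strict sum inequality
  have hsum : ∑ z ∈ Sx, v z < ∑ w ∈ Sy, v w := by
    rcases hstrict with hlt | ⟨z₀, hz₀, hvlt⟩
    · have h1 : ∑ z ∈ Sx, v z ≤ ∑ z ∈ Sx, v (δ z) :=
        Finset.sum_le_sum fun z hz => hge z ((hmemSx z).mp hz)
      have hcardT : (Sx.image δ).card = Sx.card := Finset.card_image_of_injOn hinj'
      have hltT : (Sx.image δ).card < Sy.card := by rw [hcardT]; exact hlt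
      have hss : Sx.image δ ⊂ Sy :=
        ⟨hsub, fun h => absurd (Finset.card_le_card h) (by omega)⟩
      obtain ⟨w, hwSy, hwT⟩ := Finset.exists_of_ssubset hss
      have h2 : ∑ w ∈ Sx.image δ, v w < ∑ w ∈ Sy, v w :=
        Finset.sum_lt_sum_of_subset hsub hwSy hwT (hpos w) (fun j _ _ => (hpos j).le)
      calc ∑ z ∈ Sx, v z ≤ ∑ z ∈ Sx, v (δ z) := h1
        _ = ∑ w ∈ Sx.image δ, v w := himg
        _ < ∑ w ∈ Sy, v w := h2
    · have h1 : ∑ z ∈ Sx, v z < ∑ z ∈ Sx, v (δ z) :=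
        Finset.sum_lt_sum (fun z hz => hge z ((hmemSx z).mp hz))
          ⟨z₀, (hmemSx z₀).mpr hz₀, hvlt⟩
      have h2 : ∑ w ∈ Sx.image δ, v w ≤ ∑ w ∈ Sy, v w :=
        Finset.sum_le_sum_of_subset_of_nonneg hsub (fun j _ _ => (hpos j).le)
      calc ∑ z ∈ Sx, v z < ∑ z ∈ Sx, v (δ z) := h1
        _ = ∑ w ∈ Sx.image δ, v w := himg
        _ ≤ ∑ w ∈ Sy, v w := h2
  rw [hv x, hv y]
  have := mul_lt_mul_of_pos_left hsum hβ
  linarith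
end

section
/- The ranking derived from the counting semantics satisfies Abstraction: if τ is an isomorphism between argumentation frameworks AF_1 and AF_2 (i.e., a bijection on arguments with x R_1 y iff τ(x) R_2 τ(y)), then for all arguments x of AF_1, v_α^{AF_1}(x) = v_α^{AF_2}(τ(x)). -/
/-- Abstraction: if τ is an isomorphism between argumentation
frameworks AF₁ and AF₂, then the counting semantics valuations agree:
v_α^{AF₁}(x) = v_α^{AF₂}(τ(x)) for every argument x of AF₁. -/
theorem counting_abstraction
    (X₁ X₂ : Type*) [Fintype X₁] [Fintype X₂] [Nonempty X₁] [Nonempty X₂]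
    [DecidableEq X₁] [DecidableEq X₂]
    (R₁ : X₁ → X₁ → Prop) [DecidableRel R₁] (R₂ : X₂ → X₂ → Prop) [DecidableRel R₂]
    (τ : X₁ ≃ X₂) (hτ : ∀ a b, R₁ a b ↔ R₂ (τ a) (τ b))
    (α : ℝ) (hα : 0 < α) (hα1 : α < 1)
    (N₁ N₂ : ℝ)
    (hN₁ : N₁ = Finset.univ.sup' Finset.univ_nonempty
        (fun i : X₁ => ((Finset.univ.filter (fun j => R₁ j i)).card : ℝ)))
    (hN₂ : N₂ = Finset.univ.sup' Finset.univ_nonempty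
        (fun i : X₂ => ((Finset.univ.filter (fun j => R₂ j i)).card : ℝ)))
    (v₁ : X₁ → ℝ) (v₂ : X₂ → ℝ)
    (hv₁ : ∀ i, v₁ i = 1 - (α / N₁) * ∑ j ∈ Finset.univ.filter (fun j => R₁ j i), v₁ j)
    (hv₂ : ∀ i, v₂ i = 1 - (α / N₂) * ∑ j ∈ Finset.univ.filter (fun j => R₂ j i), v₂ j) :
    ∀ x : X₁, v₁ x = v₂ (τ x) := by
  -- card equality under τ
  have hcard_eq : ∀ i : X₁,
      (Finset.univ.filter (fun j => R₁ j i)).card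
        = (Finset.univ.filter (fun j : X₂ => R₂ j (τ i))).card := by
    intro i
    apply Finset.card_bij (fun j _ => τ j)
    · intro a ha
      simp only [Finset.mem_filter, Finset.mem_univ, true_and] at ha ⊢
      exact (hτ a i).1 ha
    · intro a _ b _ h; exact τ.injective h
    · intro b hb
      simp only [Finset.mem_filter, Finset.mem_univ, true_and] at hb
      refine ⟨τ.symm b, ?_, by simp⟩
      simp only [Finset.mem_filter, Finset.mem_univ, true_and]
      exact (hτ (τ.symm b) i).2 (by simpa using hb)
  have hN : N₁ = N₂ := by
    rw [hN₁, hN₂]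
    apply le_antisymm
    · apply Finset.sup'_le; intro i _
      rw [show ((Finset.univ.filter (fun j => R₁ j i)).card : ℝ)
          = ((Finset.univ.filter (fun j : X₂ => R₂ j (τ i))).card : ℝ) from
        Nat.cast_inj.mpr (hcard_eq i)]
      exact Finset.le_sup'
        (fun i : X₂ => ((Finset.univ.filter (fun j => R₂ j i)).card : ℝ))
        (Finset.mem_univ (τ i))
    · apply Finset.sup'_le; intro i _
      have h2 : ((Finset.univ.filter (fun j : X₂ => R₂ j i)).card : ℝ)
          = ((Finset.univ.filter (fun j => R₁ j (τ.symm i))).card : ℝ) := by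
        have := hcard_eq (τ.symm i)
        simp only [Equiv.apply_symm_apply] at this
        exact_mod_cast this.symm
      rw [h2]
      exact Finset.le_sup'
        (fun i : X₁ => ((Finset.univ.filter (fun j => R₁ j i)).card : ℝ))
        (Finset.mem_univ (τ.symm i))
  -- transport hv₂
  have hsum : ∀ (i : X₁) (f : X₂ → ℝ),
      ∑ j ∈ Finset.univ.filter (fun j : X₂ => R₂ j (τ i)), f j
        = ∑ j ∈ Finset.univ.filter (fun j => R₁ j i), f (τ j) := by
    intro i f
    refine (Finset.sum_equiv τ ?_ ?_).symm
    · intro j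
      simp only [Finset.mem_filter, Finset.mem_univ, true_and]
      exact hτ j i
    · intro j _; rfl
  have hv₂' : ∀ i : X₁, v₂ (τ i)
      = 1 - (α / N₁) * ∑ j ∈ Finset.univ.filter (fun j => R₁ j i), v₂ (τ j) := by
    intro i
    rw [hv₂ (τ i), hN, hsum i v₂]
  set d : X₁ → ℝ := fun i => v₁ i - v₂ (τ i) with hd
  have hdeq : ∀ i, d i = -(α / N₁) * ∑ j ∈ Finset.univ.filter (fun j => R₁ j i), d j := by
    intro i
    simp only [hd, Finset.sum_sub_distrib]
    rw [hv₁ i, hv₂' i]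
    ring
  have hN₁nonneg : 0 ≤ N₁ := by
    rw [hN₁]
    obtain ⟨i⟩ := ‹Nonempty X₁›
    exact le_trans (Nat.cast_nonneg _)
      (Finset.le_sup' (fun i : X₁ => ((Finset.univ.filter (fun j => R₁ j i)).card : ℝ))
        (Finset.mem_univ i))
  have hcard_le : ∀ i : X₁, ((Finset.univ.filter (fun j => R₁ j i)).card : ℝ) ≤ N₁ := by
    intro i; rw [hN₁]
    exact Finset.le_sup' (fun i : X₁ => ((Finset.univ.filter (fun j => R₁ j i)).card : ℝ))
      (Finset.mem_univ i)
  rcases eq_or_lt_of_le hN₁nonneg with h0 | hpos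
  · -- N₁ = 0 : all attacker sets empty
    have hempty : ∀ i : X₁, Finset.univ.filter (fun j => R₁ j i) = ∅ := by
      intro i
      have hc := hcard_le i
      rw [← h0] at hc
      have hc0 : (Finset.univ.filter (fun j => R₁ j i)).card = 0 := by
        exact_mod_cast le_antisymm hc (Nat.cast_nonneg _)
      exact Finset.card_eq_zero.mp hc0
    intro x
    rw [hv₁ x, hv₂' x, hempty x]
    simp
  · -- N₁ > 0 : contraction argument
    set S : ℝ := Finset.univ.sup' Finset.univ_nonempty (fun i => |d i|) with hS
    have hSle : ∀ i, |d i| ≤ S :=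
      fun i => Finset.le_sup' (fun i => |d i|) (Finset.mem_univ i)
    have hSnonneg : 0 ≤ S := le_trans (abs_nonneg _) (hSle (Classical.arbitrary X₁))
    obtain ⟨i₀, _, hi₀⟩ := Finset.exists_mem_eq_sup' Finset.univ_nonempty (fun i => |d i|)
    have key : S ≤ α * S := by
      calc S = |d i₀| := hS.trans hi₀
        _ = (α / N₁) * |∑ j ∈ Finset.univ.filter (fun j => R₁ j i₀), d j| := by
              rw [hdeq i₀, abs_mul, abs_neg, abs_of_nonneg (div_nonneg hα.le hN₁nonneg)]
        _ ≤ (α / N₁) * ∑ j ∈ Finset.univ.filter (fun j => R₁ j i₀), |d j| := by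
              apply mul_le_mul_of_nonneg_left (Finset.abs_sum_le_sum_abs _ _)
                (div_nonneg hα.le hN₁nonneg)
        _ ≤ (α / N₁) * (((Finset.univ.filter (fun j => R₁ j i₀)).card : ℝ) * S) := by
              apply mul_le_mul_of_nonneg_left _ (div_nonneg hα.le hN₁nonneg)
              calc ∑ j ∈ Finset.univ.filter (fun j => R₁ j i₀), |d j|
                  ≤ ∑ _j ∈ Finset.univ.filter (fun j => R₁ j i₀), S :=
                    Finset.sum_le_sum (fun j _ => hSle j)
                _ = ((Finset.univ.filter (fun j => R₁ j i₀)).card : ℝ) * S := by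
                    rw [Finset.sum_const, nsmul_eq_mul]
        _ ≤ (α / N₁) * (N₁ * S) := by
              apply mul_le_mul_of_nonneg_left _ (div_nonneg hα.le hN₁nonneg)
              exact mul_le_mul_of_nonneg_right (hcard_le i₀) hSnonneg
        _ = α * S := by field_simp
    have hS0 : S = 0 := by nlinarith
    intro x
    have := hSle x
    rw [hS0] at this
    have h' : v₁ x - v₂ (τ x) = 0 := abs_nonpos_iff.mp this
    linarith
end

section
/- The counting semantics satisfies a subset version of strict counter-transitivity: if R^−(x) ⊊ R^−(y) (strict inclusion of attacker sets), then v_α(x) > v_α(y). -/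
/-- subset strict counter-transitivity: if the attacker set of x
is strictly included in that of y, then v_α(x) > v_α(y). -/
theorem counting_subset_strict_counter_transitivity (n : ℕ) [NeZero n]
    (R : Fin n → Fin n → Prop) [DecidableRel R]
    (α : ℝ) (hα : 0 < α) (hα1 : α < 1)
    (N : ℝ)
    (hN : N = Finset.univ.sup' Finset.univ_nonempty
        (fun i => ((Finset.univ.filter (fun j => R j i)).card : ℝ)))
    (v : Fin n → ℝ)
    (hv : ∀ i, v i = 1 - (α / N) * ∑ j ∈ Finset.univ.filter (fun j => R j i), v j)
    (x y : Fin n)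
    (hsub : Finset.univ.filter (fun j => R j x) ⊂ Finset.univ.filter (fun j => R j y)) :
    v y < v x := by
  set S : Fin n → Finset (Fin n) := fun i => Finset.univ.filter (fun j => R j i) with hS
  obtain ⟨z, hzY, hzX⟩ := Finset.exists_of_ssubset hsub
  have hcard : ∀ i, ((S i).card : ℝ) ≤ N := fun i =>
    hN ▸ Finset.le_sup' (fun i => ((S i).card : ℝ)) (Finset.mem_univ i)
  have hN1 : (1:ℝ) ≤ N := by
    have h1 : 1 ≤ (S y).card := Finset.card_pos.mpr ⟨z, hzY⟩
    calc (1:ℝ) ≤ ((S y).card : ℝ) := by exact_mod_cast h1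
    _ ≤ N := hcard y
  have hNpos : (0:ℝ) < N := lt_of_lt_of_le one_pos hN1
  have hANpos : 0 < α / N := div_pos hα hNpos
  -- all values positive
  obtain ⟨i0, -, h0⟩ := Finset.exists_min_image Finset.univ v Finset.univ_nonempty
  obtain ⟨i1, -, h1⟩ := Finset.exists_max_image Finset.univ v Finset.univ_nonempty
  have hpos : 0 < v i0 := by
    by_contra hle
    push_neg at hle
    rcases le_or_gt (v i1) 0 with hM | hM
    · -- all values ≤ 0, contradiction
      have hsum : ∑ j ∈ S i0, v j ≤ 0 :=
        Finset.sum_nonpos (fun j _ => le_trans (h1 j (Finset.mem_univ j)) hM)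
      have := hv i0
      nlinarith
    · -- min ≤ 0 < max
      have hsum0 : ∑ j ∈ S i0, v j ≤ ((S i0).card : ℝ) * v i1 := by
        calc ∑ j ∈ S i0, v j ≤ ∑ _j ∈ S i0, v i1 :=
              Finset.sum_le_sum (fun j _ => h1 j (Finset.mem_univ j))
        _ = ((S i0).card : ℝ) * v i1 := by rw [Finset.sum_const, nsmul_eq_mul]
      have hsum1 : ((S i1).card : ℝ) * v i0 ≤ ∑ j ∈ S i1, v j := by
        calc ((S i1).card : ℝ) * v i0 = ∑ _j ∈ S i1, v i0 := by
              rw [Finset.sum_const, nsmul_eq_mul]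
        _ ≤ ∑ j ∈ S i1, v j := Finset.sum_le_sum (fun j _ => h0 j (Finset.mem_univ j))
      have hc0 : ((S i0).card : ℝ) * v i1 ≤ N * v i1 :=
        mul_le_mul_of_nonneg_right (hcard i0) hM.le
      have hc1 : N * v i0 ≤ ((S i1).card : ℝ) * v i0 :=
        mul_le_mul_of_nonpos_right (hcard i1) hle
      have e0 := hv i0
      have e1 := hv i1
      -- v i0 ≥ 1 - α * v i1, v i1 ≤ 1 - α * v i0
      have k0 : 1 - α * v i1 ≤ v i0 := by
        rw [e0]
        have : (α / N) * (∑ j ∈ S i0, v j) ≤ (α / N) * (N * v i1) :=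
          mul_le_mul_of_nonneg_left (le_trans hsum0 hc0) hANpos.le
        have heq : α / N * (N * v i1) = α * v i1 := by field_simp
        rw [heq] at this
        linarith
      have k1 : v i1 ≤ 1 - α * v i0 := by
        rw [e1]
        have : (α / N) * (N * v i0) ≤ (α / N) * (∑ j ∈ S i1, v j) :=
          mul_le_mul_of_nonneg_left (le_trans hc1 hsum1) hANpos.le
        have heq : α / N * (N * v i0) = α * v i0 := by field_simp
        rw [heq] at this
        linarith
      nlinarith
  have hallpos : ∀ j, 0 < v j := fun j => lt_of_lt_of_le hpos (h0 j (Finset.mem_univ j))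
  have hsumlt : ∑ j ∈ S x, v j < ∑ j ∈ S y, v j :=
    Finset.sum_lt_sum_of_subset hsub.subset hzY hzX (hallpos z)
      (fun j _ _ => (hallpos j).le)
  have ex := hv x
  have ey := hv y
  nlinarith [mul_lt_mul_of_pos_left hsumlt hANpos]
end
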